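/- Let Q = ⟨X,A,S,τ⟩ ⊑ Q' = ⟨X',A',S',τ'⟩ be QBAFs for an explanandum e with X' = X ∪ {a} for some a ∉ X, τ'(a) = 0, where a has no attackers and no supporters in Q' and every edge in (A'∪S')∖(A∪S) has a as its source. Then under the DF-QuAD evaluation, σ(Q',a) = 0 and σ(Q',b) = σ(Q,b) for every b ∈ X. -/

import Mathlib

universe u v

variable {U : Type u} {Ag : Type v}

/-- A bipolar argumentation framework (BAF): arguments `X`, attacks `Att`, supports `Supp`. -/
structure BAF (U : Type u) where
  X : Finset U
  Att : Finset (U × U)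
  Supp : Finset (U × U)

namespace BAF

variable [DecidableEq U]

/-- The edges of a BAF: attacks together with supports. -/
def edges (B : BAF U) : Finset (U × U) := B.Att ∪ B.Supp

/-- A path from `a` to `b`: a nonempty list of consecutive edges `(c₀,c₁),…,(c_{n−1},cₙ)`
with `c₀ = a` and `cₙ = b`. -/
inductive IsPath (B : BAF U) : U → U → List (U × U) → Prop
  | single {a b : U} (h : (a, b) ∈ B.edges) : IsPath B a b [(a, b)]
  | cons {a c b : U} {p : List (U × U)} (h : (a, c) ∈ B.edges)
      (hp : IsPath B c b p) : IsPath B a b ((a, c) :: p)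

/-- `B ⊑ B'` for BAFs (componentwise inclusion). -/
def Sub (B B' : BAF U) : Prop := B.X ⊆ B'.X ∧ B.Att ⊆ B'.Att ∧ B.Supp ⊆ B'.Supp

/-- `B` is a BAF for the explanandum `e`. -/
structure IsFor (B : BAF U) (e : U) : Prop where
  e_mem : e ∈ B.X
  att_mem : ∀ p ∈ B.Att, p.1 ∈ B.X ∧ p.2 ∈ B.X
  supp_mem : ∀ p ∈ B.Supp, p.1 ∈ B.X ∧ p.2 ∈ B.X
  disj : ∀ p : U × U, ¬(p ∈ B.Att ∧ p ∈ B.Supp)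
  no_out : ∀ a : U, (e, a) ∉ B.edges
  reach : ∀ a ∈ B.X, a ≠ e → ∃ p, B.IsPath a e p
  acyclic : ∀ (a : U) (p : List (U × U)), ¬ B.IsPath a a p

/-- The number of attack edges occurring in a path. -/
def attCount (B : BAF U) (p : List (U × U)) : ℕ :=
  (p.filter (fun q => q ∈ B.Att)).length

/-- Pro arguments: arguments with a path to `e` containing an even number of attacks. -/
def pro (B : BAF U) (e : U) : Set U :=
  {a | a ∈ B.X ∧ ∃ p, B.IsPath a e p ∧ Even (B.attCount p)}

/-- Con arguments: arguments with a path to `e` containing an odd number of attacks. -/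
def con (B : BAF U) (e : U) : Set U :=
  {a | a ∈ B.X ∧ ∃ p, B.IsPath a e p ∧ Odd (B.attCount p)}

/-- The shortest path from `x` to `e` is strictly shorter than every path from `y` to `e`. -/
def SPlt (B : BAF U) (e x y : U) : Prop :=
  ∃ p, B.IsPath x e p ∧ ∀ q, B.IsPath y e q → p.length < q.length

end BAF

/-- A quantitative bipolar argumentation framework (QBAF), with base scores `bs`. -/
structure QBAF (U : Type u) where
  X : Finset U
  Att : Finset (U × U)
  Supp : Finset (U × U)
  bs : U → ℝ

namespace QBAF

variable [DecidableEq U]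

def toBAF (Q : QBAF U) : BAF U := ⟨Q.X, Q.Att, Q.Supp⟩

def edges (Q : QBAF U) : Finset (U × U) := Q.Att ∪ Q.Supp

/-- `Q` is a QBAF for `e`: its underlying BAF is for `e` and base scores lie in `[0,1]`. -/
def IsFor (Q : QBAF U) (e : U) : Prop :=
  Q.toBAF.IsFor e ∧ ∀ a ∈ Q.X, Q.bs a ∈ Set.Icc (0 : ℝ) 1

/-- `Q ⊑ Q'` for QBAFs. -/
def Sub (Q Q' : QBAF U) : Prop :=
  Q.X ⊆ Q'.X ∧ Q.Att ⊆ Q'.Att ∧ Q.Supp ⊆ Q'.Supp ∧ ∀ a ∈ Q.X, Q'.bs a = Q.bs a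

def attackers (Q : QBAF U) (a : U) : Finset U :=
  (Q.Att.filter (fun p => p.2 = a)).image Prod.fst

def supporters (Q : QBAF U) (a : U) : Finset U :=
  (Q.Supp.filter (fun p => p.2 = a)).image Prod.fst

end QBAF

/-- The DF-QuAD aggregation function on finite lists of values. -/
noncomputable def dfAgg : List ℝ → ℝ
  | [] => 0
  | v :: vs => v + dfAgg vs - v * dfAgg vs

/-- The DF-QuAD combination function. -/
noncomputable def dfComb (v0 vm vp : ℝ) : ℝ :=
  if vp ≤ vm then v0 - v0 * |vp - vm| else v0 + (1 - v0) * |vp - vm|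

/-- `f` is the DF-QuAD evaluation of the QBAF `Q`. -/
def IsDFQuADEval [DecidableEq U] (Q : QBAF U) (f : U → ℝ) : Prop :=
  ∀ a ∈ Q.X,
    f a = dfComb (Q.bs a) (dfAgg ((Q.attackers a).toList.map f))
        (dfAgg ((Q.supporters a).toList.map f))

/-- The stance determined by an evaluation value in `[0,1]`:
`−` (coded `-1`) on `[0,0.5)`, `0` on `{0.5}`, `+` (coded `1`) on `(0.5,1]`. -/
noncomputable def stanceVal (v : ℝ) : ℤ :=
  if v < 1 / 2 then -1 else if v = 1 / 2 then 0 else 1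

/-- An argumentative exchange (AX): exchange BAFs `B`, private QBAFs `Q`,
and a contributor mapping `contrib`. -/
structure AX (U : Type u) (Ag : Type v) where
  n : ℕ
  B : ℕ → BAF U
  Q : Ag → ℕ → QBAF U
  contrib : U × U → Ag × ℕ

namespace AX

variable [DecidableEq U]

/-- `E` is an AX for the explanandum `e` amongst the agents `Ag`. -/
structure IsAX (E : AX U Ag) (e : U) : Prop where
  n_pos : 0 < E.n
  agents : ∃ α β : Ag, α ≠ β
  B_for : ∀ t ≤ E.n, (E.B t).IsFor e
  B0_X : (E.B 0).X = {e}
  B0_Att : (E.B 0).Att = ∅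
  B0_Supp : (E.B 0).Supp = ∅
  B_mono : ∀ t < E.n, (E.B t).Sub (E.B (t + 1))
  Q_for : ∀ (α : Ag), ∀ t ≤ E.n, (E.Q α t).IsFor e
  Q_mono : ∀ (α : Ag), ∀ t < E.n, (E.Q α t).Sub (E.Q α (t + 1))
  Q_diff_X : ∀ (α : Ag), ∀ t < E.n,
    (E.Q α (t + 1)).X \ (E.Q α t).X ⊆ (E.B (t + 1)).X \ (E.B t).X
  Q_diff_Att : ∀ (α : Ag), ∀ t < E.n,
    (E.Q α (t + 1)).Att \ (E.Q α t).Att ⊆ (E.B (t + 1)).Att \ (E.B t).Att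
  Q_diff_Supp : ∀ (α : Ag), ∀ t < E.n,
    (E.Q α (t + 1)).Supp \ (E.Q α t).Supp ⊆ (E.B (t + 1)).Supp \ (E.B t).Supp
  learn_X : ∀ (α : Ag), ∀ t < E.n,
    (E.B (t + 1)).X \ (E.B t).X ⊆ (E.Q α (t + 1)).X
  learn_Att : ∀ (α : Ag), ∀ t < E.n,
    (E.B (t + 1)).Att \ (E.B t).Att ⊆ (E.Q α (t + 1)).Att
  learn_Supp : ∀ (α : Ag), ∀ t < E.n,
    (E.B (t + 1)).Supp \ (E.B t).Supp ⊆ (E.Q α (t + 1)).Supp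
  contrib_pos : ∀ p ∈ (E.B E.n).edges, 0 < (E.contrib p).2
  contrib_le : ∀ p ∈ (E.B E.n).edges, (E.contrib p).2 ≤ E.n
  contrib_mem : ∀ p ∈ (E.B E.n).edges, p ∈ (E.B (E.contrib p).2).edges
  contrib_new : ∀ p ∈ (E.B E.n).edges, p ∉ (E.B ((E.contrib p).2 - 1)).edges

/-- The set of edges contributed by agent `α` at timestep `t`. -/
def Cset [DecidableEq Ag] (E : AX U Ag) (α : Ag) (t : ℕ) : Finset (U × U) :=
  (E.B E.n).edges.filter (fun p => E.contrib p = (α, t))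

end AX

/-- All agents hold the same stance at timestep `t`. -/
def ResolvedAt (st : Ag → ℕ → ℤ) (t : ℕ) : Prop := ∀ α β : Ag, st α t = st β t

/-- The AX (with an initial conflict) is resolved. -/
def Resolved (E : AX U Ag) (st : Ag → ℕ → ℤ) : Prop :=
  ¬ ResolvedAt st 0 ∧ ResolvedAt st E.n ∧ ∀ t, 0 < t → t < E.n → ¬ ResolvedAt st t

/-- The AX (with an initial conflict) is unresolved. -/
def Unresolved (E : AX U Ag) (st : Ag → ℕ → ℤ) : Prop :=
  ¬ ResolvedAt st 0 ∧ ∀ t, 0 < t → t ≤ E.n → ¬ ResolvedAt st t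

/-- Agent `α` is arguing for `e` at `t`: some agent has a strictly smaller stance. -/
def ArguingFor (st : Ag → ℕ → ℤ) (α : Ag) (t : ℕ) : Prop := ∃ β, st β t < st α t

/-- Agent `α` is arguing against `e` at `t`: some agent has a strictly greater stance. -/
def ArguingAgainst (st : Ag → ℕ → ℤ) (α : Ag) (t : ℕ) : Prop := ∃ β, st α t < st β t

section Behaviours

variable [DecidableEq U]

/-- Condition (1) of the greedy behaviour: `(a,b)` is a pair of the private QBAF `Qp`
not yet in the exchange BAF `Bp`, in line with the agent's state (`forE`). -/
def GreedyEligible (Qp : QBAF U) (Bp : BAF U) (e : U) (forE : Bool) (a b : U) : Prop :=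
  (a, b) ∈ Qp.edges ∧ (a, b) ∉ Bp.edges ∧
    (if forE then
        ((a, b) ∈ Qp.Supp ∧ (b ∈ Bp.pro e ∨ b = e)) ∨ ((a, b) ∈ Qp.Att ∧ b ∈ Bp.con e)
      else
        ((a, b) ∈ Qp.Supp ∧ b ∈ Bp.con e) ∨ ((a, b) ∈ Qp.Att ∧ (b ∈ Bp.pro e ∨ b = e)))

/-- A greedy choice: eligible, of maximal strength (2), and closest to `e` among
equally strong eligible pairs (3). -/
def GreedyChoice (Qp : QBAF U) (Bp : BAF U) (σα : U → ℝ) (e : U) (forE : Bool)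
    (a b : U) : Prop :=
  GreedyEligible Qp Bp e forE a b ∧
    (∀ a' b' : U, GreedyEligible Qp Bp e forE a' b' → σα a' ≤ σα a) ∧
    (∀ a'' b'' : U, GreedyEligible Qp Bp e forE a'' b'' → σα a'' = σα a →
      ¬ BAF.SPlt Qp.toBAF e a'' a)

/-- A contribution set is a correct greedy contribution: empty or a single greedy choice. -/
def GreedyOK (Qp : QBAF U) (Bp : BAF U) (σα : U → ℝ) (e : U) (forE : Bool)
    (C : Finset (U × U)) : Prop :=
  C = ∅ ∨ ∃ a b : U, C = {(a, b)} ∧ GreedyChoice Qp Bp σα e forE a b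

/-- Agent `α` exhibits greedy behaviour throughout the AX `E`. -/
def GreedyBehaviour [DecidableEq Ag] (E : AX U Ag) (e : U)
    (ev : Ag → QBAF U → U → ℝ) (st : Ag → ℕ → ℤ) (α : Ag) : Prop :=
  ∀ t, 0 < t → t ≤ E.n →
    E.Cset α t = ∅ ∨
      ∃ a b : U, E.Cset α t = {(a, b)} ∧
        (ArguingFor st α (t - 1) →
          GreedyChoice (E.Q α (t - 1)) (E.B (t - 1)) (ev α (E.Q α (t - 1))) e true a b) ∧
        (ArguingAgainst st α (t - 1) →
          GreedyChoice (E.Q α (t - 1)) (E.B (t - 1)) (ev α (E.Q α (t - 1))) e false a b)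

/-- The inner condition of the shallow behaviour for a contribution set `C`. -/
def ShallowInner (Qp : QBAF U) (Bp : BAF U) (σα : U → ℝ) (e : U) (forE : Bool)
    (C : Finset (U × U)) (max : ℕ) : Prop :=
  C.card ≤ max ∧ (∀ p ∈ C, p.2 = e) ∧
    (if forE then
        C ⊆ Qp.Supp \ Bp.Supp ∧
          ∀ p ∈ C, ∀ b : U, (b, e) ∈ Qp.Supp → (b, e) ∉ Bp.Supp ∪ C → σα b ≤ σα p.1
      else
        C ⊆ Qp.Att \ Bp.Att ∧
          ∀ p ∈ C, ∀ b : U, (b, e) ∈ Qp.Att → (b, e) ∉ Bp.Att ∪ C → σα b ≤ σα p.1)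

/-- A contribution set is a correct shallow contribution: it satisfies the inner condition
and is of maximal cardinality doing so. -/
def ShallowOK (Qp : QBAF U) (Bp : BAF U) (σα : U → ℝ) (e : U) (forE : Bool)
    (C : Finset (U × U)) (max : ℕ) : Prop :=
  ShallowInner Qp Bp σα e forE C max ∧
    ∀ C' : Finset (U × U), ShallowInner Qp Bp σα e forE C' max → C'.card ≤ C.card

/-- A private view of the exchange BAF `Bp` by an agent with private QBAF `Qα`. -/
def PrivateView (Bp : BAF U) (Qα : QBAF U) (V : QBAF U) : Prop :=
  Bp.Sub V.toBAF ∧ V.Sub Qα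

/-- `ε` is the perceived effect on `e` of the pair `(a,b)` for an agent with private QBAF
`Qp` given the exchange BAF `Bp` (under the DF-QuAD evaluation). -/
def PerceivedEffect (Qp : QBAF U) (Bp : BAF U) (e a b : U) (ε : ℝ) : Prop :=
  ∃ (V V' : QBAF U) (f f' : U → ℝ),
    PrivateView Bp Qp V ∧
    V'.X = insert a V.X ∧
    V'.Att = (V'.X ×ˢ V'.X) ∩ Qp.Att ∧
    V'.Supp = (V'.X ×ˢ V'.X) ∩ Qp.Supp ∧
    (∀ x ∈ V'.X, V'.bs x = Qp.bs x) ∧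
    IsDFQuADEval V f ∧ IsDFQuADEval V' f' ∧
    ε = f' e - f e

/-- A pair eligible for the counterfactual behaviour. -/
def CFEligible (Qp : QBAF U) (Bp : BAF U) (a b : U) : Prop :=
  (a, b) ∈ Qp.edges ∧ (a, b) ∉ Bp.edges ∧ a ∈ Qp.X ∧ a ∉ Bp.X ∧ b ∈ Bp.X

/-- Agent `α` exhibits counterfactual behaviour throughout the AX `E`,
where `εf α t a b` is the perceived effect of `(a,b)` at timestep `t`. -/
def CFBehaviour [DecidableEq Ag] (E : AX U Ag) (st : Ag → ℕ → ℤ)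
    (εf : Ag → ℕ → U → U → ℝ) (α : Ag) : Prop :=
  ∀ t, 0 < t → t ≤ E.n →
    E.Cset α t = ∅ ∨
      ∃ a b : U, E.Cset α t = {(a, b)} ∧
        CFEligible (E.Q α (t - 1)) (E.B (t - 1)) a b ∧
        (ArguingFor st α (t - 1) →
          0 < εf α t a b ∧
            ∀ a' b' : U, CFEligible (E.Q α (t - 1)) (E.B (t - 1)) a' b' →
              εf α t a' b' ≤ εf α t a b) ∧
        (ArguingAgainst st α (t - 1) →
          εf α t a b < 0 ∧
            ∀ a' b' : U, CFEligible (E.Q α (t - 1)) (E.B (t - 1)) a' b' →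
              εf α t a b ≤ εf α t a' b')

end Behaviours

/- Every argument other than `a` has the same attackers and supporters in `Q'` as in `Q`, up to
the possible addition of `a`, whose value is `0`. Since `Σ` ignores zeros (it is `1 - ∏ (1 - vᵢ)`),
every argument of `Q` aggregates the same values in both frameworks, so a well-founded induction
along the acyclic edge relation of `Q'` shows that the evaluations agree on `X`. -/

theorem wellFounded_of_forall_not_transGen_self {α : Type*} {r : α → α → Prop} (s : Finset α)
    (hs : ∀ x y, r x y → x ∈ s) (hr : ∀ x, ¬ Relation.TransGen r x x) : WellFounded r := by
  classical
  let ancestors (y : α) : Finset α := s.filter (Relation.TransGen r · y)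
  refine Subrelation.wf (fun {x y} hxy => ?_) (measure fun y => (ancestors y).card).wf
  have hsub : ancestors x ⊆ ancestors y := fun z hz => by
    simp only [ancestors, Finset.mem_filter] at hz ⊢
    exact ⟨hz.1, hz.2.tail hxy⟩
  refine Finset.card_lt_card ((Finset.ssubset_iff_of_subset hsub).2 ⟨x, ?_, ?_⟩)
  · exact Finset.mem_filter.2 ⟨hs x y hxy, .single hxy⟩
  · exact fun hx => hr x (Finset.mem_filter.1 hx).2

theorem dfAgg_eq_one_sub_prod (l : List ℝ) : dfAgg l = 1 - (l.map (1 - ·)).prod := by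
  induction l with
  | nil => simp [dfAgg]
  | cons v vs ih => simp only [dfAgg, ih, List.map_cons, List.prod_cons]; ring

theorem dfAgg_map_toList (s : Finset U) (g : U → ℝ) :
    dfAgg (s.toList.map g) = 1 - ∏ x ∈ s, (1 - g x) := by
  rw [dfAgg_eq_one_sub_prod, List.map_map, Function.comp_def, Finset.prod_map_toList]

section

variable [DecidableEq U]

namespace BAF

theorem IsPath.concat {B : BAF U} {x y z : U} {p : List (U × U)}
    (hp : B.IsPath x y p) (h : (y, z) ∈ B.edges) : B.IsPath x z (p ++ [(y, z)]) := by
  induction hp with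
  | single h' => exact .cons h' (.single h)
  | cons h' _ ih => exact .cons h' (ih h)

theorem exists_isPath_of_transGen {B : BAF U} {x y : U}
    (h : Relation.TransGen (fun x y => (x, y) ∈ B.edges) x y) : ∃ p, B.IsPath x y p := by
  induction h with
  | single h => exact ⟨_, .single h⟩
  | tail _ h ih =>
    obtain ⟨p, hp⟩ := ih
    exact ⟨_, hp.concat h⟩

theorem IsFor.wellFounded_edges {B : BAF U} {e : U} (hB : B.IsFor e) :
    WellFounded fun x y => (x, y) ∈ B.edges := by
  refine wellFounded_of_forall_not_transGen_self B.X (fun x y hxy => ?_) fun x hx => ?_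
  · rcases Finset.mem_union.1 hxy with h | h
    exacts [(hB.att_mem _ h).1, (hB.supp_mem _ h).1]
  · obtain ⟨p, hp⟩ := exists_isPath_of_transGen hx
    exact hB.acyclic x p hp

end BAF

namespace QBAF

theorem mem_attackers {Q : QBAF U} {b c : U} : c ∈ Q.attackers b ↔ (c, b) ∈ Q.Att := by
  simp [attackers]

theorem mem_supporters {Q : QBAF U} {b c : U} : c ∈ Q.supporters b ↔ (c, b) ∈ Q.Supp := by
  simp [supporters]

variable {Q Q' : QBAF U} {a b : U}

theorem attackers_subset_insert (hnew : ∀ p ∈ Q'.Att, p ∉ Q.Att → p.1 = a) :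
    Q'.attackers b ⊆ insert a (Q.attackers b) := fun c hc => by
  rw [Finset.mem_insert, mem_attackers]
  by_cases h : (c, b) ∈ Q.Att
  exacts [.inr h, .inl (hnew _ (mem_attackers.1 hc) h)]

theorem supporters_subset_insert (hnew : ∀ p ∈ Q'.Supp, p ∉ Q.Supp → p.1 = a) :
    Q'.supporters b ⊆ insert a (Q.supporters b) := fun c hc => by
  rw [Finset.mem_insert, mem_supporters]
  by_cases h : (c, b) ∈ Q.Supp
  exacts [.inr h, .inl (hnew _ (mem_supporters.1 hc) h)]

theorem attackers_mono (h : Q.Sub Q') : Q.attackers b ⊆ Q'.attackers b :=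
  fun _ hc => mem_attackers.2 (h.2.1 (mem_attackers.1 hc))

theorem supporters_mono (h : Q.Sub Q') : Q.supporters b ⊆ Q'.supporters b :=
  fun _ hc => mem_supporters.2 (h.2.2.1 (mem_supporters.1 hc))

end QBAF

theorem dfAgg_map_toList_eq_of_subset_insert {s t : Finset U} {g g' : U → ℝ} {a : U}
    (hst : s ⊆ t) (hts : t ⊆ insert a s) (ha : g' a = 0) (heq : ∀ x ∈ s, g' x = g x) :
    dfAgg (t.toList.map g') = dfAgg (s.toList.map g) := by
  have hone : ∀ x ∈ t, x ∉ s → 1 - g' x = 1 := fun x hxt hxs => by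
    obtain rfl : x = a := (Finset.mem_insert.1 (hts hxt)).resolve_right hxs
    rw [ha, sub_zero]
  rw [dfAgg_map_toList, dfAgg_map_toList, ← Finset.prod_subset hst hone,
    Finset.prod_congr rfl fun x hx => by rw [heq x hx]]

end

theorem statement12_general {U : Type u} [DecidableEq U] (e : U) (Q Q' : QBAF U)
    (hQ : Q.IsFor e) (hQ' : Q'.IsFor e) (hsub : Q.Sub Q')
    (a : U) (hX : Q'.X = insert a Q.X)
    (hbs : Q'.bs a = 0)
    (hnoin : ∀ b : U, (b, a) ∉ Q'.edges)
    (hsrc : ∀ p ∈ Q'.edges, p ∉ Q.edges → p.1 = a)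
    (f f' : U → ℝ) (hf : IsDFQuADEval Q f) (hf' : IsDFQuADEval Q' f') :
    f' a = 0 ∧ ∀ b ∈ Q.X, f' b = f b := by
  have hfa : f' a = 0 := by
    have hA : Q'.attackers a = ∅ := Finset.eq_empty_of_forall_notMem fun c hc =>
      hnoin c (Finset.mem_union_left _ (QBAF.mem_attackers.1 hc))
    have hS : Q'.supporters a = ∅ := Finset.eq_empty_of_forall_notMem fun c hc =>
      hnoin c (Finset.mem_union_right _ (QBAF.mem_supporters.1 hc))
    rw [hf' a (hX ▸ Finset.mem_insert_self a Q.X), hA, hS, hbs]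
    simp [dfComb, dfAgg]
  -- an old edge cannot change its kind, since attacks and supports of `Q'` are disjoint
  have hAtt : ∀ p ∈ Q'.Att, p ∉ Q.Att → p.1 = a := fun p hp hpA =>
    hsrc p (Finset.mem_union_left _ hp) fun hpQ => (Finset.mem_union.1 hpQ).elim hpA
      fun hpS => hQ'.1.disj p ⟨hp, hsub.2.2.1 hpS⟩
  have hSupp : ∀ p ∈ Q'.Supp, p ∉ Q.Supp → p.1 = a := fun p hp hpS =>
    hsrc p (Finset.mem_union_right _ hp) fun hpQ => (Finset.mem_union.1 hpQ).elim
      (fun hpA => hQ'.1.disj p ⟨hsub.2.1 hpA, hp⟩) hpS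
  refine ⟨hfa, fun b => hQ'.1.wellFounded_edges.induction b
    (C := fun b => b ∈ Q.X → f' b = f b) fun b ih hb => ?_⟩
  rw [hf' b (hsub.1 hb), hf b hb, hsub.2.2.2 b hb,
    dfAgg_map_toList_eq_of_subset_insert (QBAF.attackers_mono hsub)
      (QBAF.attackers_subset_insert hAtt) hfa fun c hc =>
        ih c (Finset.mem_union_left _ (hsub.2.1 (QBAF.mem_attackers.1 hc)))
          (hQ.1.att_mem _ (QBAF.mem_attackers.1 hc)).1,
    dfAgg_map_toList_eq_of_subset_insert (QBAF.supporters_mono hsub)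
      (QBAF.supporters_subset_insert hSupp) hfa fun c hc =>
        ih c (Finset.mem_union_right _ (hsub.2.2.1 (QBAF.mem_supporters.1 hc)))
          (hQ.1.supp_mem _ (QBAF.mem_supporters.1 hc)).1]

/-- an added argument with base score 0 and no attackers or supporters has
DF-QuAD evaluation 0 and leaves all other evaluations unchanged. -/
theorem statement12 {U : Type u} [DecidableEq U] (e : U) (Q Q' : QBAF U)
    (hQ : Q.IsFor e) (hQ' : Q'.IsFor e) (hsub : Q.Sub Q')
    (a : U) (ha : a ∉ Q.X) (hX : Q'.X = insert a Q.X)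
    (hbs : Q'.bs a = 0)
    (hnoin : ∀ b : U, (b, a) ∉ Q'.edges)
    (hsrc : ∀ p ∈ Q'.edges, p ∉ Q.edges → p.1 = a)
    (f f' : U → ℝ) (hf : IsDFQuADEval Q f) (hf' : IsDFQuADEval Q' f') :
    f' a = 0 ∧ ∀ b ∈ Q.X, f' b = f b :=
  statement12_general e Q Q' hQ hQ' hsub a hX hbs hnoin hsrc f f' hf hf'
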